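/- arXiv:2008.09155 — 7 statements merged into one kernel-verified Lean document; each statement's English description precedes it below -/
import Mathlib

section
/- For any two probability vectors p ≠ q in the simplex Δ_n and θ ∈ (0,1), one has var_ω(θp + (1-θ)q) > θ·var_ω(p) + (1-θ)·var_ω(q); i.e., the variance p ↦ (1/2)p^T Ω p is strictly concave on the probability simplex, where Ω is the effective resistance matrix of a connected weighted graph. -/
/-! For `v = p - q` we have `∑ v = 0`, which kills the diagonal terms of
`ω_ij = Q†_ii + Q†_jj - Q†_ij - Q†_ji`, so `vᵀ Ω v = -2 vᵀ Q† v`. A vector with zero sum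
is orthogonal to the kernel (the constants) of the symmetric `Q`, hence lies in its range,
on which `Q Q†` is the identity; writing `v = Q y` with `y = Q† v` gives
`vᵀ Q† v = yᵀ Q y > 0`. Strict concavity then follows from the identity
`f(θp + (1-θ)q) = θ f(p) + (1-θ) f(q) - θ(1-θ) f(p - q)` for the quadratic form `f` of `Ω`. -/

open Finset Matrix

namespace Matrix

variable {ι R : Type*} [Fintype ι]

section CommRing

variable [CommRing R]

theorem convexCombo_dotProduct_mulVec_convexCombo (A : Matrix ι ι R) (p q : ι → R) (θ : R) :
    (θ • p + (1 - θ) • q) ⬝ᵥ A *ᵥ (θ • p + (1 - θ) • q) =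
      θ * (p ⬝ᵥ A *ᵥ p) + (1 - θ) * (q ⬝ᵥ A *ᵥ q)
        - θ * (1 - θ) * ((p - q) ⬝ᵥ A *ᵥ (p - q)) := by
  simp only [add_dotProduct, sub_dotProduct, smul_dotProduct, mulVec_add, mulVec_sub,
    mulVec_smul, dotProduct_add, dotProduct_sub, dotProduct_smul, smul_eq_mul]
  ring

theorem single_sub_single_dotProduct_mulVec [DecidableEq ι] (M : Matrix ι ι R) (i j : ι) :
    (Pi.single i 1 - Pi.single j 1) ⬝ᵥ M *ᵥ (Pi.single i 1 - Pi.single j 1) =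
      M i i + M j j - M i j - M j i := by
  simp only [mulVec_sub, mulVec_single_one, sub_dotProduct, single_dotProduct, one_mul,
    Pi.sub_apply, col_apply]
  ring

theorem dotProduct_replicateRow_mulVec_of_sum_eq_zero (d : ι → R) {v : ι → R}
    (hv : ∑ i, v i = 0) : v ⬝ᵥ replicateRow ι d *ᵥ v = 0 := by
  rw [replicateRow_mulVec_eq_const]
  simp [dotProduct, ← Finset.sum_mul, hv]

theorem dotProduct_replicateCol_mulVec_of_sum_eq_zero (d : ι → R) {v : ι → R}
    (hv : ∑ i, v i = 0) : v ⬝ᵥ replicateCol ι d *ᵥ v = 0 := by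
  rw [dotProduct_mulVec, mulVec_replicateCol_eq_const]
  simp [dotProduct, ← Finset.mul_sum, hv]

theorem dotProduct_mulVec_eq_neg_two_mul_of_sum_eq_zero [DecidableEq ι] {M Ω : Matrix ι ι R}
    (hΩ : ∀ i j, Ω i j =
      (Pi.single i 1 - Pi.single j 1) ⬝ᵥ M *ᵥ (Pi.single i 1 - Pi.single j 1))
    {v : ι → R} (hv : ∑ i, v i = 0) :
    v ⬝ᵥ Ω *ᵥ v = -2 * (v ⬝ᵥ M *ᵥ v) := by
  have hΩdecomp : Ω = replicateCol ι (diag M) + replicateRow ι (diag M) - M - Mᵀ := by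
    ext i j
    rw [hΩ, single_sub_single_dotProduct_mulVec]
    simp
  rw [hΩdecomp, sub_mulVec, sub_mulVec, add_mulVec, dotProduct_sub, dotProduct_sub,
    dotProduct_add, dotProduct_replicateCol_mulVec_of_sum_eq_zero _ hv,
    dotProduct_replicateRow_mulVec_of_sum_eq_zero _ hv, dotProduct_transpose_mulVec]
  ring

end CommRing

theorem sum_mulVec_eq_zero_of_mulVec_one_eq_zero [CommRing R] {Q : Matrix ι ι R}
    (hsymm : Qᵀ = Q) (hQ1 : Q *ᵥ 1 = 0) (x : ι → R) : ∑ i, (Q *ᵥ x) i = 0 := by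
  rw [← one_dotProduct, dotProduct_mulVec, ← mulVec_transpose, hsymm, hQ1, zero_dotProduct]

theorem mulVec_mulVec_eq_self_of_sum_eq_zero [Field R] [CharZero R] {Q Qd : Matrix ι ι R}
    (hsymm : Qᵀ = Q) (hker : ∀ x : ι → R, Q *ᵥ x = 0 ↔ ∃ c : R, x = fun _ => c)
    (h1 : Q * Qd * Q = Q) (h3 : (Q * Qd)ᵀ = Q * Qd) {v : ι → R} (hv : ∑ i, v i = 0) :
    Q *ᵥ (Qd *ᵥ v) = v := by
  classical
  have hQ1 : Q *ᵥ 1 = 0 := (hker 1).2 ⟨1, rfl⟩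
  have hproj : Q * (1 - Q * Qd) = 0 := by
    have : ((1 - Q * Qd) * Q)ᵀ = 0 := by
      rw [Matrix.sub_mul, h1, Matrix.one_mul, sub_self, transpose_zero]
    rwa [transpose_mul, transpose_sub, transpose_one, h3, hsymm] at this
  obtain ⟨c, hc⟩ := (hker ((1 - Q * Qd) *ᵥ v)).1 (by rw [mulVec_mulVec, hproj, zero_mulVec])
  rw [sub_mulVec, one_mulVec, ← mulVec_mulVec] at hc
  have hsum : ∑ i, (v - Q *ᵥ (Qd *ᵥ v)) i = 0 := by
    simp only [Pi.sub_apply, Finset.sum_sub_distrib, hv,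
      sum_mulVec_eq_zero_of_mulVec_one_eq_zero hsymm hQ1, sub_zero]
  rw [hc, Finset.sum_const, Finset.card_univ] at hsum
  refine (sub_eq_zero.1 ?_).symm
  rw [hc]
  funext i
  exact (smul_eq_zero.1 hsum).resolve_left (Fintype.card_pos_iff.2 ⟨i⟩).ne'

theorem PosSemidef.dotProduct_pos_of_mulVec_eq {Q : Matrix ι ι ℝ} (hQ : Q.PosSemidef)
    {y v : ι → ℝ} (hy : Q *ᵥ y = v) (hv : v ≠ 0) : 0 < v ⬝ᵥ y := by
  have hvy : v ⬝ᵥ y = y ⬝ᵥ Q *ᵥ y := by rw [← hy, dotProduct_comm]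
  refine hvy ▸ lt_of_le_of_ne (by simpa using hQ.dotProduct_mulVec_nonneg y) fun h => hv ?_
  rw [← hy, ← hQ.dotProduct_mulVec_zero_iff, star_trivial, h]

end Matrix

theorem var_strict_concave_on_simplex_general {n : ℕ} (Q Qd : Matrix (Fin n) (Fin n) ℝ)
    (hQ : Q.PosSemidef)
    (hker : ∀ x : Fin n → ℝ, Q *ᵥ x = 0 ↔ ∃ c : ℝ, x = fun _ => c)
    (h1 : Q * Qd * Q = Q)
    (h3 : (Q * Qd)ᵀ = Q * Qd)
    (Ω : Matrix (Fin n) (Fin n) ℝ)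
    (hΩ : ∀ i j, Ω i j =
      (Pi.single i 1 - Pi.single j 1) ⬝ᵥ Qd *ᵥ (Pi.single i 1 - Pi.single j 1))
    (p q : Fin n → ℝ)
    (hp : ∑ i, p i = 1) (hq : ∑ i, q i = 1) (hpq : p ≠ q)
    (θ : ℝ) (hθ0 : 0 < θ) (hθ1 : θ < 1) :
    θ * ((1 / 2) * (p ⬝ᵥ Ω *ᵥ p)) + (1 - θ) * ((1 / 2) * (q ⬝ᵥ Ω *ᵥ q))
      < (1 / 2) * ((θ • p + (1 - θ) • q) ⬝ᵥ Ω *ᵥ (θ • p + (1 - θ) • q)) := by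
  have hsymm : Qᵀ = Q := hQ.isHermitian.eq
  have hsum : ∑ i, (p - q) i = 0 := by simp [Finset.sum_sub_distrib, hp, hq]
  have hpos : 0 < (p - q) ⬝ᵥ Qd *ᵥ (p - q) :=
    hQ.dotProduct_pos_of_mulVec_eq (mulVec_mulVec_eq_self_of_sum_eq_zero hsymm hker h1 h3 hsum)
      (sub_ne_zero.2 hpq)
  rw [convexCombo_dotProduct_mulVec_convexCombo,
    dotProduct_mulVec_eq_neg_two_mul_of_sum_eq_zero hΩ hsum]
  nlinarith [mul_pos (mul_pos hθ0 (sub_pos.2 hθ1)) hpos]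

/-- Strict concavity of the variance `p ↦ (1/2) pᵀ Ω p` on the probability simplex, where
`Ω` is the effective resistance matrix (`ω_{ij} = (e_i - e_j)ᵀ Q† (e_i - e_j)`) of a connected
weighted graph: its Laplacian `Q` is positive semidefinite with kernel spanned by the all-ones
vector, and `Qd` is the Moore–Penrose pseudoinverse of `Q`. -/
theorem var_strict_concave_on_simplex {n : ℕ} (Q Qd : Matrix (Fin n) (Fin n) ℝ)
    (hQ : Q.PosSemidef)
    (hker : ∀ x : Fin n → ℝ, Q *ᵥ x = 0 ↔ ∃ c : ℝ, x = fun _ => c)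
    (h1 : Q * Qd * Q = Q) (h2 : Qd * Q * Qd = Qd)
    (h3 : (Q * Qd)ᵀ = Q * Qd) (h4 : (Qd * Q)ᵀ = Qd * Q)
    (Ω : Matrix (Fin n) (Fin n) ℝ)
    (hΩ : ∀ i j, Ω i j =
      (Pi.single i 1 - Pi.single j 1) ⬝ᵥ Qd *ᵥ (Pi.single i 1 - Pi.single j 1))
    (p q : Fin n → ℝ) (hp0 : ∀ i, 0 ≤ p i) (hq0 : ∀ i, 0 ≤ q i)
    (hp : ∑ i, p i = 1) (hq : ∑ i, q i = 1) (hpq : p ≠ q)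
    (θ : ℝ) (hθ0 : 0 < θ) (hθ1 : θ < 1) :
    θ * ((1 / 2) * (p ⬝ᵥ Ω *ᵥ p)) + (1 - θ) * ((1 / 2) * (q ⬝ᵥ Ω *ᵥ q))
      < (1 / 2) * ((θ • p + (1 - θ) • q) ⬝ᵥ Ω *ᵥ (θ • p + (1 - θ) • q)) :=
  var_strict_concave_on_simplex_general Q Qd hQ hker h1 h3 Ω hΩ p q hp hq hpq θ hθ0 hθ1
end

section
/- The network modularity M(g) = (1/2m) ∑_{i,j} (A_{ij} - k_i k_j/(2m)) δ_{g(i)g(j)} equals twice the covariance of the joint distribution P(i,j) = c_{ij}/(2m) with respect to the distance d_g(i,j) = 1 - δ_{g(i)g(j)}: M(g) = 2·cov_{d_g}(P). -/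
open Finset Matrix

/-!
With `δ` the block indicator, `d_g = 1 - δ` takes only the values `0` and `1`, so `d_g² = d_g` and
`2·cov_{d_g}(P) = ∑ (p̃ q̃ - P)(1 - δ)`. The joint law `P` and the product of its marginals have the
same total mass, so the constant part cancels and what is left is `∑ (P - p̃ q̃) δ`, the modularity.
-/

section

variable {ι : Type*} [Fintype ι]

lemma one_sub_ite_sq (p : Prop) [Decidable p] :
    (1 - if p then (1 : ℝ) else 0) ^ 2 = 1 - if p then 1 else 0 := by
  split_ifs <;> norm_num

lemma sum_sum_mul_one_sub_of_sum_sum_eq_zero (f δ : ι → ι → ℝ) (hf : ∑ i, ∑ j, f i j = 0) :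
    ∑ i, ∑ j, f i j * (1 - δ i j) = -∑ i, ∑ j, f i j * δ i j := by
  simp only [mul_one_sub, Finset.sum_sub_distrib, hf, zero_sub]

lemma two_mul_cov_one_sub_ite (P : ι → ι → ℝ) (p q : ι → ℝ) (r : ι → ι → Prop)
    [DecidableRel r] (hmass : ∑ i, ∑ j, p i * q j = ∑ i, ∑ j, P i j) :
    2 * ((1 / 2) * ∑ i, ∑ j, (p i * q j - P i j) * (1 - if r i j then (1 : ℝ) else 0) ^ 2)
      = ∑ i, ∑ j, (P i j - p i * q j) * if r i j then 1 else 0 := by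
  have hzero : ∑ i, ∑ j, (p i * q j - P i j) = 0 := by
    simp only [Finset.sum_sub_distrib, hmass, sub_self]
  simp only [one_sub_ite_sq]
  rw [sum_sum_mul_one_sub_of_sum_sum_eq_zero _ _ hzero]
  simp only [← Finset.sum_neg_distrib, ← neg_mul, neg_sub]
  ring

lemma div_self_mul_div_self {G₀ : Type*} [GroupWithZero G₀] (a : G₀) :
    a / a * (a / a) = a / a := by
  rw [← mul_div_assoc, div_self_mul_self]

/-- Both sides are `K / K`, which is `1`, or `0` when `K = 0`. -/
lemma sum_sum_div_mul_div_eq_sum_sum_div (c : ι → ι → ℝ) (k : ι → ℝ) (K : ℝ)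
    (hk : ∀ i, k i = ∑ j, c i j) (hK : ∑ i, k i = K) :
    ∑ i, ∑ j, k i / K * (k j / K) = ∑ i, ∑ j, c i j / K := by
  simp only [← Finset.sum_div, ← Finset.sum_mul, ← Finset.mul_sum, ← hk, hK]
  exact div_self_mul_div_self K

end

theorem modularity_eq_two_cov_general {n : ℕ} (c : Matrix (Fin n) (Fin n) ℝ)
    (g : Fin n → ℕ) (k : Fin n → ℝ) (hk : ∀ i, k i = ∑ j, c i j)
    (m : ℝ) (hm : m = (1 / 2) * ∑ i, k i) :
    (1 / (2 * m)) * ∑ i, ∑ j,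
        (c i j - k i * k j / (2 * m)) * (if g i = g j then (1 : ℝ) else 0)
      = 2 * ((1 / 2) * ∑ i, ∑ j,
          (k i / (2 * m) * (k j / (2 * m)) - c i j / (2 * m)) *
            (1 - if g i = g j then (1 : ℝ) else 0) ^ 2) := by
  have hK : ∑ i, k i = 2 * m := by rw [hm]; ring
  rw [two_mul_cov_one_sub_ite (fun i j ↦ c i j / (2 * m)) (fun i ↦ k i / (2 * m))
    (fun j ↦ k j / (2 * m)) (fun i j ↦ g i = g j)
    (sum_sum_div_mul_div_eq_sum_sum_div c k (2 * m) hk hK)]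
  simp only [Finset.mul_sum]
  exact Finset.sum_congr rfl fun i _ ↦ Finset.sum_congr rfl fun j _ ↦ by ring

/-- The network modularity `M(g) = (1/2m) ∑_{i,j} (A_{ij} - k_i k_j/(2m)) δ_{g(i)g(j)}` equals
twice the covariance of the joint distribution `P(i,j) = c_{ij}/(2m)` (whose marginals are
`k_i/(2m)`) with respect to the distance `d_g(i,j) = 1 - δ_{g(i)g(j)}`. -/
theorem modularity_eq_two_cov {n : ℕ} (c : Matrix (Fin n) (Fin n) ℝ) (hc : c.IsSymm)
    (g : Fin n → ℕ) (k : Fin n → ℝ) (hk : ∀ i, k i = ∑ j, c i j)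
    (m : ℝ) (hm : m = (1 / 2) * ∑ i, k i) (hm0 : 0 < m) :
    (1 / (2 * m)) * ∑ i, ∑ j,
        (c i j - k i * k j / (2 * m)) * (if g i = g j then (1 : ℝ) else 0)
      = 2 * ((1 / 2) * ∑ i, ∑ j,
          (k i / (2 * m) * (k j / (2 * m)) - c i j / (2 * m)) *
            (1 - if g i = g j then (1 : ℝ) else 0) ^ 2) :=
  modularity_eq_two_cov_general c g k hk m hm
end

section
/- Fiedler's identity: the (n+1)×(n+1) block matrix [[0, u^T],[u, Ω]] is invertible with inverse -(1/2)·[[4 var_ω(p), -2p^T],[-2p, Q]], where p is the unique vector satisfying Ωp = 2 var_ω(p) u and u^T p = 1. -/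
open Finset Matrix

/-! If `Q G Q = Q` and `G Q` is symmetric, then `1 - G Q` is symmetric, annihilated by `Q` and
fixes the all-ones vector `u`; as `ker Q = ℝ u`, it is `J / n`. Applied to `Q†` and to `Q†ᵀ` this
gives `Q† Q = Q Q† = I - J / n`, so expanding `Ω = u ζᵀ + ζ uᵀ - 2 Q†` yields
`Ω Q = u wᵀ - 2 I` and `Q Ω = w uᵀ - 2 I` with `w = Q ζ + (2 / n) u`. Applying the latter to `p`,
the left side vanishes because `Ω p ∈ ℝ u` and `Q u = 0`, so `2 p = w`. The product of the two
block matrices is then the identity block by block, and a one-sided inverse of a square matrix is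
two-sided. -/

namespace Matrix

variable {ι K : Type*} [Field K]

def resistanceMatrix (ζ : ι → K) (G : Matrix ι ι K) : Matrix ι ι K :=
  vecMulVec 1 ζ + vecMulVec ζ 1 - (2 : K) • G

theorem resistanceMatrix_transpose (ζ : ι → K) (G : Matrix ι ι K) :
    (resistanceMatrix ζ G)ᵀ = resistanceMatrix ζ Gᵀ := by
  simp only [resistanceMatrix, transpose_sub, transpose_add, transpose_smul, transpose_vecMulVec]
  abel

variable [Fintype ι] [DecidableEq ι]

variable (ι K) in
def centeringMatrix : Matrix ι ι K :=
  1 - (Fintype.card ι : K)⁻¹ • vecMulVec 1 1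

theorem eq_inv_card_smul_vecMulVec_one_of_mul_eq_zero {A Q : Matrix ι ι K}
    (hker : ∀ x, Q *ᵥ x = 0 → ∃ c : K, x = fun _ => c)
    (hA : Aᵀ = A) (hQA : Q * A = 0) (hA1 : A *ᵥ 1 = 1) :
    A = (Fintype.card ι : K)⁻¹ • vecMulVec 1 1 := by
  have hcol : ∀ i j k, A i j = A k j := by
    intro i j k
    obtain ⟨c, hc⟩ := hker (A *ᵥ Pi.single j 1) (by rw [mulVec_mulVec, hQA, zero_mulVec])
    rw [mulVec_single_one] at hc
    exact (congrFun hc i).trans (congrFun hc k).symm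
  have hrow : ∀ i j, A i j = A i i := fun i j =>
    (congrFun (congrFun hA i) j).symm.trans (hcol j i i)
  have hdiag : ∀ i, (Fintype.card ι : K) * A i i = 1 := fun i => by
    simpa [mulVec, dotProduct, hrow i] using congrFun hA1 i
  ext i j
  simp [hrow i j, eq_inv_of_mul_eq_one_right (hdiag i)]

theorem pinv_mul_eq_centeringMatrix {Q G : Matrix ι ι K}
    (hker : ∀ x, Q *ᵥ x = 0 ↔ ∃ c : K, x = fun _ => c)
    (hQGQ : Q * G * Q = Q) (hGQ : (G * Q)ᵀ = G * Q) :
    G * Q = centeringMatrix ι K := by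
  have hQ1 : Q *ᵥ 1 = 0 := (hker 1).2 ⟨1, rfl⟩
  have := eq_inv_card_smul_vecMulVec_one_of_mul_eq_zero (A := 1 - G * Q) (fun x => (hker x).1)
    (by rw [transpose_sub, transpose_one, hGQ])
    (by rw [mul_sub, mul_one, ← mul_assoc, hQGQ, sub_self])
    (by rw [sub_mulVec, one_mulVec, ← mulVec_mulVec, hQ1, mulVec_zero, sub_zero])
  rw [centeringMatrix, ← this, sub_sub_cancel]

theorem centeringMatrix_transpose : (centeringMatrix ι K)ᵀ = centeringMatrix ι K := by
  rw [centeringMatrix, transpose_sub, transpose_one, transpose_smul, transpose_vecMulVec]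

theorem mul_pinv_eq_centeringMatrix {Q G : Matrix ι ι K} (hQ : Qᵀ = Q)
    (hker : ∀ x, Q *ᵥ x = 0 ↔ ∃ c : K, x = fun _ => c)
    (hQGQ : Q * G * Q = Q) (hQG : (Q * G)ᵀ = Q * G) :
    Q * G = centeringMatrix ι K := by
  have hGQ : Gᵀ * Q = Q * G := by rw [← hQG, transpose_mul, hQ]
  rw [← hGQ]
  refine pinv_mul_eq_centeringMatrix hker ?_ (by rw [hGQ, hQG])
  have := congrArg transpose hQGQ
  rwa [transpose_mul, transpose_mul, hQ, ← mul_assoc] at this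

theorem resistanceMatrix_mul {Q G : Matrix ι ι K} (ζ : ι → K) (hQ : Qᵀ = Q) (hQ1 : Q *ᵥ 1 = 0)
    (hGQ : G * Q = centeringMatrix ι K) :
    resistanceMatrix ζ G * Q =
      vecMulVec 1 (Q *ᵥ ζ + (2 * (Fintype.card ι : K)⁻¹) • 1) - 2 • 1 := by
  have hζQ : ζ ᵥ* Q = Q *ᵥ ζ := by rw [← mulVec_transpose, hQ]
  have h1Q : (1 : ι → K) ᵥ* Q = 0 := by rw [← mulVec_transpose, hQ, hQ1]
  rw [resistanceMatrix, sub_mul, add_mul, vecMulVec_mul, vecMulVec_mul, smul_mul, hGQ, hζQ, h1Q,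
    centeringMatrix, vecMulVec_add, vecMulVec_smul, vecMulVec_zero, mul_smul]
  module

theorem mul_resistanceMatrix {Q G : Matrix ι ι K} (ζ : ι → K) (hQ : Qᵀ = Q) (hQ1 : Q *ᵥ 1 = 0)
    (hQG : Q * G = centeringMatrix ι K) :
    Q * resistanceMatrix ζ G =
      vecMulVec (Q *ᵥ ζ + (2 * (Fintype.card ι : K)⁻¹) • 1) 1 - 2 • 1 := by
  have hGQ : Gᵀ * Q = centeringMatrix ι K := by
    rw [← hQ, ← transpose_mul, hQG, centeringMatrix_transpose]
  rw [← transpose_transpose (Q * _), transpose_mul, resistanceMatrix_transpose, hQ,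
    resistanceMatrix_mul ζ hQ hQ1 hGQ, transpose_sub, transpose_vecMulVec, transpose_smul,
    transpose_one]

theorem two_smul_eq_of_mul_eq_vecMulVec_one_sub {Q Ω : Matrix ι ι K} {w p : ι → K} {c : K}
    (hQΩ : Q * Ω = vecMulVec w 1 - 2 • 1) (hQ1 : Q *ᵥ 1 = 0) (hp : Ω *ᵥ p = fun _ => c)
    (hpsum : ∑ i, p i = 1) : 2 • p = w := by
  have hconst : (fun _ => c : ι → K) = c • 1 := by ext; simp
  have h := congrArg (Q *ᵥ ·) hp
  simp only [mulVec_mulVec, hQΩ, hconst, mulVec_smul, hQ1, smul_zero, sub_mulVec,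
    vecMulVec_mulVec, op_smul_eq_smul, one_dotProduct, hpsum, one_smul, smul_mulVec,
    one_mulVec, sub_eq_zero] at h
  exact h.symm

theorem fromBlocks_ones_mul_fromBlocks_eq_one [NeZero (2 : K)] {Ω Q : Matrix ι ι K} {p : ι → K}
    {v : K}
    (hQ1 : (1 : ι → K) ᵥ* Q = 0) (hΩQ : Ω * Q = vecMulVec 1 (2 • p) - 2 • 1)
    (hp : Ω *ᵥ p = fun _ => 2 * v) (hpsum : ∑ i, p i = 1) :
    fromBlocks (0 : Matrix Unit Unit K) (of fun _ _ => 1) (of fun _ _ => 1) Ω *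
      ((-(1 / 2) : K) • fromBlocks (of fun _ _ => 4 * v) (of fun (_ : Unit) j => -2 * p j)
        (of fun i (_ : Unit) => -2 * p i) Q) = 1 := by
  have hcol (j : ι) : ∑ i, Q i j = 0 := by simpa [vecMul, dotProduct] using congrFun hQ1 j
  have hrow (i : ι) : ∑ j, Ω i j * p j = 2 * v := by simpa [mulVec, dotProduct] using congrFun hp i
  rw [Matrix.mul_smul, fromBlocks_multiply, ← fromBlocks_one, fromBlocks_smul]
  congr 1
  · ext i j
    simp [mul_apply, ← Finset.mul_sum, hpsum, two_ne_zero]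
  · ext i j
    simp [mul_apply, hcol]
  · ext i j
    simp [mul_apply, mul_left_comm _ (2 : K), ← Finset.mul_sum, hrow, two_ne_zero]
    ring
  · rw [hΩQ]
    ext i j
    by_cases hij : i = j <;> simp [mul_apply, one_apply, ofNat_apply, hij]
    field_simp
    ring

end Matrix

theorem fiedler_identity_general {n : ℕ} (Q Qd : Matrix (Fin n) (Fin n) ℝ)
    (hQ : Q.PosSemidef)
    (hker : ∀ x : Fin n → ℝ, Q *ᵥ x = 0 ↔ ∃ c : ℝ, x = fun _ => c)
    (h1 : Q * Qd * Q = Q)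
    (h3 : (Q * Qd)ᵀ = Q * Qd) (h4 : (Qd * Q)ᵀ = Qd * Q)
    (ζ : Fin n → ℝ)
    (Ω : Matrix (Fin n) (Fin n) ℝ)
    (hΩ : ∀ i j, Ω i j = ζ i + ζ j - 2 * Qd i j)
    (p : Fin n → ℝ) (v : ℝ)
    (hp : Ω *ᵥ p = fun _ => 2 * v) (hpsum : ∑ i, p i = 1)
    (M M' : Matrix (Unit ⊕ Fin n) (Unit ⊕ Fin n) ℝ)
    (hM : M = Matrix.fromBlocks (0 : Matrix Unit Unit ℝ)
      (Matrix.of fun _ _ => (1 : ℝ)) (Matrix.of fun _ _ => (1 : ℝ)) Ω)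
    (hM' : M' = (-(1 / 2) : ℝ) • Matrix.fromBlocks
      (Matrix.of fun _ _ => 4 * v)
      (Matrix.of fun (_ : Unit) j => -2 * p j)
      (Matrix.of fun i (_ : Unit) => -2 * p i) Q) :
    M * M' = 1 ∧ M' * M = 1 := by
  have hQsymm : Qᵀ = Q := (conjTranspose_eq_transpose_of_trivial Q).symm.trans hQ.isHermitian
  have hQ1 : Q *ᵥ 1 = 0 := (hker 1).2 ⟨1, rfl⟩
  have hΩ_eq : Ω = resistanceMatrix ζ Qd := by
    ext i j
    simp [resistanceMatrix, hΩ]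
    ring
  have hp_eq : 2 • p = Q *ᵥ ζ + (2 * (n : ℝ)⁻¹) • 1 := by
    simpa only [Fintype.card_fin] using two_smul_eq_of_mul_eq_vecMulVec_one_sub
      (mul_resistanceMatrix ζ hQsymm hQ1 (mul_pinv_eq_centeringMatrix hQsymm hker h1 h3)) hQ1
      (hΩ_eq ▸ hp) hpsum
  have hΩQ : Ω * Q = vecMulVec 1 (2 • p) - 2 • 1 := by
    rw [hp_eq, hΩ_eq]
    simpa only [Fintype.card_fin] using
      resistanceMatrix_mul ζ hQsymm hQ1 (pinv_mul_eq_centeringMatrix hker h1 h4)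
  have hMM' : M * M' = 1 := by
    subst hM hM'
    exact fromBlocks_ones_mul_fromBlocks_eq_one (by rw [← mulVec_transpose, hQsymm, hQ1])
      hΩQ hp hpsum
  exact ⟨hMM', mul_eq_one_comm.mp hMM'⟩

/-- Fiedler's identity: the `(n+1)×(n+1)` block matrix `[[0, uᵀ],[u, Ω]]` is invertible with
inverse `-(1/2)·[[4 var_ω(p), -2pᵀ],[-2p, Q]]`, where `p` is the unique vector satisfying
`Ωp = 2 var_ω(p) u` and `uᵀp = 1`. Here `Q` is the Laplacian of a connected weighted graph
(positive semidefinite, kernel spanned by the all-ones vector), `Qd` its Moore–Penrose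
pseudoinverse, `ζ = diag Qd` and `Ω = uζᵀ + ζuᵀ - 2Qd` the effective resistance matrix. -/
theorem fiedler_identity {n : ℕ} (Q Qd : Matrix (Fin n) (Fin n) ℝ)
    (hQ : Q.PosSemidef)
    (hker : ∀ x : Fin n → ℝ, Q *ᵥ x = 0 ↔ ∃ c : ℝ, x = fun _ => c)
    (h1 : Q * Qd * Q = Q) (h2 : Qd * Q * Qd = Qd)
    (h3 : (Q * Qd)ᵀ = Q * Qd) (h4 : (Qd * Q)ᵀ = Qd * Q)
    (ζ : Fin n → ℝ) (hζ : ∀ i, ζ i = Qd i i)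
    (Ω : Matrix (Fin n) (Fin n) ℝ)
    (hΩ : ∀ i j, Ω i j = ζ i + ζ j - 2 * Qd i j)
    (p : Fin n → ℝ) (v : ℝ) (hv : v = (1 / 2) * (p ⬝ᵥ Ω *ᵥ p))
    (hp : Ω *ᵥ p = fun _ => 2 * v) (hpsum : ∑ i, p i = 1)
    (M M' : Matrix (Unit ⊕ Fin n) (Unit ⊕ Fin n) ℝ)
    (hM : M = Matrix.fromBlocks (0 : Matrix Unit Unit ℝ)
      (Matrix.of fun _ _ => (1 : ℝ)) (Matrix.of fun _ _ => (1 : ℝ)) Ω)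
    (hM' : M' = (-(1 / 2) : ℝ) • Matrix.fromBlocks
      (Matrix.of fun _ _ => 4 * v)
      (Matrix.of fun (_ : Unit) j => -2 * p j)
      (Matrix.of fun i (_ : Unit) => -2 * p i) Q) :
    M * M' = 1 ∧ M' * M = 1 :=
  fiedler_identity_general Q Qd hQ hker h1 h3 h4 ζ Ω hΩ p v hp hpsum M M' hM hM'
end

section
/- The vector p = (1/2)Qζ + u/n satisfies Ωp = 2 var_ω(p)·u with var_ω(p) = (1/4)ζ^T Q ζ + u^T ζ/n, where ζ = diag(Q^†) and Ω is the effective resistance matrix. -/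
open Finset Matrix

/-- The vector `p = (1/2) Q ζ + u/n` satisfies `Ω p = 2 var_ω(p) u` with
`var_ω(p) = (1/4) ζᵀ Q ζ + uᵀζ/n`, where `ζ = diag Q†` and `Ω = uζᵀ + ζuᵀ - 2Q†` is the
effective resistance matrix. Here `Q u = 0` and `Q Q† = I - uuᵀ/n`. -/
theorem p_formula_satisfies_local_optimality {n : ℕ}
    (Q Qd : Matrix (Fin n) (Fin n) ℝ)
    (hQsym : Q.IsSymm) (hQdsym : Qd.IsSymm)
    (hQu : Q *ᵥ (fun _ => (1 : ℝ)) = 0) (hQdu : Qd *ᵥ (fun _ => (1 : ℝ)) = 0)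
    (hQQd : Q * Qd = 1 - ((n : ℝ))⁻¹ • Matrix.of (fun _ _ => (1 : ℝ)))
    (ζ : Fin n → ℝ) (hζ : ∀ i, ζ i = Qd i i)
    (Ω : Matrix (Fin n) (Fin n) ℝ)
    (hΩ : ∀ i j, Ω i j = ζ i + ζ j - 2 * Qd i j)
    (p : Fin n → ℝ) (hp : ∀ i, p i = (1 / 2) * (Q *ᵥ ζ) i + 1 / (n : ℝ)) :
    Ω *ᵥ p = (fun _ => 2 * ((1 / 4) * (ζ ⬝ᵥ Q *ᵥ ζ) + (∑ i, ζ i) / (n : ℝ)))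
      ∧ (1 / 2) * (p ⬝ᵥ Ω *ᵥ p) = (1 / 4) * (ζ ⬝ᵥ Q *ᵥ ζ) + (∑ i, ζ i) / (n : ℝ) := by
  rcases Nat.eq_zero_or_pos n with hn | hn
  · subst hn
    constructor
    · funext i; exact absurd i.2 (by omega)
    · simp [dotProduct]
  have hn0 : (n : ℝ) ≠ 0 := Nat.cast_ne_zero.mpr hn.ne'
  -- row sums of Q vanish
  have hQrow : ∀ i, ∑ j, Q i j = 0 := by
    intro i
    have := congrFun hQu i
    simpa [Matrix.mulVec, dotProduct] using this
  have hQcol : ∀ j, ∑ i, Q i j = 0 := by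
    intro j
    have hsym : ∀ i, Q i j = Q j i := fun i => (congrFun (congrFun hQsym i) j).symm
    simp only [hsym]
    exact hQrow j
  have hQdrow : ∀ i, ∑ j, Qd i j = 0 := by
    intro i
    have := congrFun hQdu i
    simpa [Matrix.mulVec, dotProduct] using this
  have hQζ : ∑ i, (Q *ᵥ ζ) i = 0 := by
    simp only [Matrix.mulVec, dotProduct]
    rw [Finset.sum_comm]
    refine Finset.sum_eq_zero fun j _ => ?_
    rw [← Finset.sum_mul, hQcol, zero_mul]
  have hS : ∑ j, p j = 1 := by
    simp only [hp]
    rw [Finset.sum_add_distrib, ← Finset.mul_sum, hQζ, mul_zero, zero_add,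
      Finset.sum_const, Finset.card_fin, nsmul_eq_mul]
    field_simp
  have hQdQ : Qd * Q = 1 - ((n : ℝ))⁻¹ • Matrix.of (fun _ _ => (1 : ℝ)) := by
    have h := congrArg Matrix.transpose hQQd
    rw [Matrix.transpose_mul, hQdsym, hQsym] at h
    rw [h]
    ext i j
    simp [Matrix.transpose_apply, Matrix.one_apply, eq_comm]
  have hQdQζ : ∀ i, (Qd *ᵥ (Q *ᵥ ζ)) i = ζ i - (∑ k, ζ k) / (n : ℝ) := by
    intro i
    rw [Matrix.mulVec_mulVec, hQdQ]
    simp [Matrix.sub_mulVec, Matrix.smul_mulVec, Matrix.mulVec, dotProduct,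
      sub_mul, Finset.sum_sub_distrib, Matrix.one_apply, ite_mul, ← Finset.mul_sum,
      div_eq_inv_mul]
  have hQdp : ∀ i, (Qd *ᵥ p) i = (1 / 2) * (ζ i - (∑ k, ζ k) / (n : ℝ)) := by
    intro i
    have : (Qd *ᵥ p) i = ∑ j, Qd i j * p j := rfl
    rw [this]
    simp only [hp]
    have expand : ∀ j, Qd i j * ((1 / 2) * (Q *ᵥ ζ) j + 1 / (n : ℝ)) =
        (1 / 2) * (Qd i j * (Q *ᵥ ζ) j) + (1 / (n : ℝ)) * Qd i j := fun j => by ring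
    rw [Finset.sum_congr rfl fun j _ => expand j, Finset.sum_add_distrib,
      ← Finset.mul_sum, ← Finset.mul_sum, hQdrow, mul_zero, add_zero]
    have : ∑ j, Qd i j * (Q *ᵥ ζ) j = (Qd *ᵥ (Q *ᵥ ζ)) i := rfl
    rw [this, hQdQζ]
  have hT : ∑ j, ζ j * p j = (1 / 2) * (ζ ⬝ᵥ Q *ᵥ ζ) + (∑ k, ζ k) / (n : ℝ) := by
    simp only [hp]
    have expand : ∀ j, ζ j * ((1 / 2) * (Q *ᵥ ζ) j + 1 / (n : ℝ)) =
        (1 / 2) * (ζ j * (Q *ᵥ ζ) j) + ζ j * (1 / (n : ℝ)) := fun j => by ring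
    rw [Finset.sum_congr rfl fun j _ => expand j, Finset.sum_add_distrib,
      ← Finset.mul_sum, ← Finset.sum_mul]
    rw [dotProduct]
    ring
  have h1 : Ω *ᵥ p = (fun _ => 2 * ((1 / 4) * (ζ ⬝ᵥ Q *ᵥ ζ) + (∑ i, ζ i) / (n : ℝ))) := by
    funext i
    have : (Ω *ᵥ p) i = ∑ j, Ω i j * p j := rfl
    rw [this]
    simp only [hΩ]
    have expand : ∀ j, (ζ i + ζ j - 2 * Qd i j) * p j =
        ζ i * p j + ζ j * p j - 2 * (Qd i j * p j) := fun j => by ring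
    rw [Finset.sum_congr rfl fun j _ => expand j, Finset.sum_sub_distrib,
      Finset.sum_add_distrib, ← Finset.mul_sum, ← Finset.mul_sum, hS, hT]
    have : ∑ j, Qd i j * p j = (Qd *ᵥ p) i := rfl
    rw [this, hQdp]
    ring
  refine ⟨h1, ?_⟩
  rw [h1]
  have : p ⬝ᵥ (fun _ => 2 * ((1 / 4) * (ζ ⬝ᵥ Q *ᵥ ζ) + (∑ i, ζ i) / (n : ℝ)))
      = (∑ j, p j) * (2 * ((1 / 4) * (ζ ⬝ᵥ Q *ᵥ ζ) + (∑ i, ζ i) / (n : ℝ))) := by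
    rw [dotProduct, Finset.sum_mul]
  rw [this, hS]
  ring
end

section
/- Foster's theorem: in any connected weighted graph on n nodes, ∑_{(i,j)∈L} c_{ij} ω_{ij} = n - 1, i.e., tr(QΩ)/2 = n - 1, where the sum runs over all links. -/
open Finset Matrix

/-- Foster's theorem: in any connected weighted graph on `n` nodes,
`∑_{(i,j) ∈ L} c_{ij} ω_{ij} = n - 1`, where the sum runs over all links; summing over all
ordered pairs, `(1/2) ∑_{i,j} c_{ij} ω_{ij} = n - 1`. Connectivity of the graph is encoded by
`Q Q† = I - uuᵀ/n` for the Moore–Penrose pseudoinverse `Q†` of the Laplacian `Q`. -/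
theorem foster_theorem {n : ℕ} (hn : 1 ≤ n) (c : Matrix (Fin n) (Fin n) ℝ)
    (hcsym : c.IsSymm) (hcdiag : ∀ i, c i i = 0) (hc0 : ∀ i j, 0 ≤ c i j)
    (Q Qd : Matrix (Fin n) (Fin n) ℝ)
    (hQ : ∀ i j, Q i j = if i = j then ∑ l, c i l else -c i j)
    (h1 : Q * Qd * Q = Q) (h2 : Qd * Q * Qd = Qd)
    (h3 : (Q * Qd)ᵀ = Q * Qd) (h4 : (Qd * Q)ᵀ = Qd * Q)
    (hconn : Q * Qd = 1 - ((n : ℝ))⁻¹ • Matrix.of (fun _ _ => (1 : ℝ)))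
    (Ω : Matrix (Fin n) (Fin n) ℝ)
    (hΩ : ∀ i j, Ω i j =
      (Pi.single i 1 - Pi.single j 1) ⬝ᵥ Qd *ᵥ (Pi.single i 1 - Pi.single j 1)) :
    (1 / 2) * ∑ i, ∑ j, c i j * Ω i j = n - 1 := by
  have hcs : ∀ i j, c j i = c i j := fun i j => by
    conv_lhs => rw [← hcsym]
    rfl
  have hΩ' : ∀ i j, Ω i j = Qd i i - Qd i j - Qd j i + Qd j j := by
    intro i j
    rw [hΩ]
    simp [dotProduct, mulVec, Pi.single_apply, sub_mul, mul_sub,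
      Finset.sum_sub_distrib, ite_mul, mul_ite]
    ring
  set A := ∑ i, ∑ j, c i j * Qd i i with hA
  set B := ∑ i, ∑ j, c i j * Qd j j with hB
  set C := ∑ i, ∑ j, c i j * Qd i j with hC
  set D := ∑ i, ∑ j, c i j * Qd j i with hD
  have hsum : ∑ i, ∑ j, c i j * Ω i j = A + B - C - D := by
    rw [hA, hB, hC, hD]
    simp only [← Finset.sum_add_distrib, ← Finset.sum_sub_distrib]
    apply Finset.sum_congr rfl; intro i _
    apply Finset.sum_congr rfl; intro j _
    rw [hΩ' i j]; ring
  have hAB : A = B := by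
    rw [hB, Finset.sum_comm]
    apply Finset.sum_congr rfl; intro i _
    apply Finset.sum_congr rfl; intro j _
    rw [hcs]
  have hCD : C = D := by
    rw [hD, Finset.sum_comm]
    apply Finset.sum_congr rfl; intro i _
    apply Finset.sum_congr rfl; intro j _
    rw [hcs]
  have hT : ∑ i, ∑ j, Q i j * Qd j i = (n : ℝ) - 1 := by
    have h1 : ∀ i, ∑ j, Q i j * Qd j i = (Q * Qd) i i := fun i =>
      (Matrix.mul_apply).symm
    have hn0 : (n : ℝ) ≠ 0 := by positivity
    simp only [h1, hconn]
    simp [Matrix.one_apply, Finset.sum_sub_distrib, mul_comm, hn0]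
  have hTAD : ∑ i, ∑ j, Q i j * Qd j i = A - D := by
    rw [hA, hD, ← Finset.sum_sub_distrib]
    apply Finset.sum_congr rfl; intro i _
    have hQ' : ∀ j, Q i j = (if i = j then ∑ l, c i l else 0) - c i j := by
      intro j
      rw [hQ]
      split
      · next h => subst h; simp [hcdiag]
      · ring
    calc ∑ j, Q i j * Qd j i
        = ∑ j, ((if i = j then (∑ l, c i l) * Qd j i else 0) - c i j * Qd j i) := by
          apply Finset.sum_congr rfl; intro j _
          rw [hQ']; split <;> ring
      _ = (∑ l, c i l) * Qd i i - ∑ j, c i j * Qd j i := by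
          rw [Finset.sum_sub_distrib, Finset.sum_ite_eq]
          simp
      _ = ∑ j, c i j * Qd i i - ∑ j, c i j * Qd j i := by rw [Finset.sum_mul]
  rw [hsum]
  have : A - D = (n : ℝ) - 1 := by rw [← hTAD, hT]
  rw [hAB, hCD] at *
  linarith
end

section
/- The effective resistance between nodes i and j in the configuration graph with degree sequence k (complete graph with link weights c_{ij} = k_i k_j/(2m - 1)) equals ((2m-1)/(2m))·(1/k_i + 1/k_j), where 2m = ∑_i k_i. -/
/-!
The configuration Laplacian is `Q = (S - 1)⁻¹ (S · diag k - k kᵀ)`. For a vector `v` with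
`∑ v = 0`, the rank-one part annihilates `diag(k)⁻¹ v`, so `Q x = v` is solved explicitly by
`x = ((S - 1) / S) · v / k`. Since `Q` is symmetric, every `G` with `Q G Q = Q` (in particular
`Q^†`) gives `v ⬝ G v = x ⬝ Q G Q x = x ⬝ v`; for `v = e_i - e_j` this is
`((S - 1) / S) (1 / k_i + 1 / k_j)`.
-/

open Matrix

namespace Matrix

variable {ι R : Type*} [Fintype ι] [CommRing R]

theorem IsSymm.dotProduct_mulVec_eq_of_mul_mul_eq {A G : Matrix ι ι R} (hA : A.IsSymm)
    (hG : A * G * A = A) {x b : ι → R} (hx : A *ᵥ x = b) : b ⬝ᵥ G *ᵥ b = x ⬝ᵥ b := by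
  subst hx
  calc A *ᵥ x ⬝ᵥ G *ᵥ (A *ᵥ x) = x ᵥ* Aᵀ ⬝ᵥ (G * A) *ᵥ x := by
        rw [vecMul_transpose, mulVec_mulVec]
    _ = x ⬝ᵥ (A * G * A) *ᵥ x := by
        rw [← dotProduct_mulVec, hA.eq, mulVec_mulVec, mul_assoc]
    _ = x ⬝ᵥ A *ᵥ x := by rw [hG]

end Matrix

section ConfigurationLaplacian

variable {ι : Type*} [DecidableEq ι]

noncomputable def configurationLaplacian (k : ι → ℝ) (S : ℝ) : Matrix ι ι ℝ :=
  (S - 1)⁻¹ • (S • diagonal k - vecMulVec k k)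

theorem configurationLaplacian_apply (k : ι → ℝ) (S : ℝ) (i j : ι) :
    configurationLaplacian k S i j =
      if i = j then k i * (S - k i) / (S - 1) else -(k i * k j / (S - 1)) := by
  simp only [configurationLaplacian, vecMulVec, Matrix.smul_apply, Matrix.sub_apply,
    diagonal_apply, of_apply, smul_eq_mul]
  split_ifs with hij
  · subst hij
    ring
  · ring

theorem isSymm_configurationLaplacian (k : ι → ℝ) (S : ℝ) :
    (configurationLaplacian k S).IsSymm :=
  (((isSymm_diagonal k).smul S).sub (by simp [IsSymm])).smul _

theorem configurationLaplacian_mulVec_div [Fintype ι] {k v : ι → ℝ} {S : ℝ} (hk : ∀ t, k t ≠ 0)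
    (hS : S ≠ 0) (hS1 : S ≠ 1) (hv : ∑ t, v t = 0) :
    configurationLaplacian k S *ᵥ (((S - 1) / S) • (v / k)) = v := by
  have hkv : k ⬝ᵥ (v / k) = 0 := by
    simp only [dotProduct, Pi.div_apply, mul_div_cancel₀ _ (hk _), hv]
  ext t
  simp only [configurationLaplacian, smul_mulVec, sub_mulVec, mulVec_smul, vecMulVec_mulVec,
    hkv, MulOpposite.op_zero, zero_smul, sub_zero, mulVec_diagonal, Pi.smul_apply, Pi.div_apply,
    smul_eq_mul]
  field_simp [hk t, sub_ne_zero.mpr hS1]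

end ConfigurationLaplacian

theorem configuration_graph_effective_resistance_general {n : ℕ} (k : Fin n → ℝ)
    (hk : ∀ i, 0 < k i) (S : ℝ) (hS1 : 1 < S)
    (Q Qd : Matrix (Fin n) (Fin n) ℝ)
    (hQ : ∀ i j, Q i j =
      if i = j then k i * (S - k i) / (S - 1) else -(k i * k j / (S - 1)))
    (h1 : Q * Qd * Q = Q)
    (Ω : Matrix (Fin n) (Fin n) ℝ)
    (hΩ : ∀ i j, Ω i j =
      (Pi.single i 1 - Pi.single j 1) ⬝ᵥ Qd *ᵥ (Pi.single i 1 - Pi.single j 1)) :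
    ∀ i j : Fin n, i ≠ j → Ω i j = ((S - 1) / S) * (1 / k i + 1 / k j) := by
  intro i j hij
  set v : Fin n → ℝ := Pi.single i 1 - Pi.single j 1
  have hQ_eq : Q = configurationLaplacian k S := by
    ext a b
    rw [hQ, configurationLaplacian_apply]
  have hv : ∑ t, v t = 0 := by simp [v]
  have hsolve : Q *ᵥ (((S - 1) / S) • (v / k)) = v := by
    rw [hQ_eq]
    exact configurationLaplacian_mulVec_div (fun t => (hk t).ne') (zero_lt_one.trans hS1).ne'
      hS1.ne' hv
  have hsymm : Q.IsSymm := hQ_eq ▸ isSymm_configurationLaplacian k S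
  rw [hΩ, hsymm.dotProduct_mulVec_eq_of_mul_mul_eq h1 hsolve]
  simp only [v, dotProduct_sub, dotProduct_single, Pi.smul_apply, Pi.div_apply, Pi.sub_apply,
    Pi.single_eq_same, Pi.single_eq_of_ne hij, Pi.single_eq_of_ne hij.symm, smul_eq_mul]
  ring

/-- The effective resistance between nodes `i ≠ j` in the configuration graph with degree
sequence `k` (complete graph with link weights `c_{ij} = k_i k_j/(2m - 1)`, `2m = ∑ k_i`)
equals `((2m-1)/(2m)) (1/k_i + 1/k_j)`. -/
theorem configuration_graph_effective_resistance {n : ℕ} (k : Fin n → ℝ)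
    (hk : ∀ i, 0 < k i) (S : ℝ) (hS : S = ∑ i, k i) (hS1 : 1 < S)
    (Q Qd : Matrix (Fin n) (Fin n) ℝ)
    (hQ : ∀ i j, Q i j =
      if i = j then k i * (S - k i) / (S - 1) else -(k i * k j / (S - 1)))
    (h1 : Q * Qd * Q = Q) (h2 : Qd * Q * Qd = Qd)
    (h3 : (Q * Qd)ᵀ = Q * Qd) (h4 : (Qd * Q)ᵀ = Qd * Q)
    (hconn : Q * Qd = 1 - ((n : ℝ))⁻¹ • Matrix.of (fun _ _ => (1 : ℝ)))
    (Ω : Matrix (Fin n) (Fin n) ℝ)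
    (hΩ : ∀ i j, Ω i j =
      (Pi.single i 1 - Pi.single j 1) ⬝ᵥ Qd *ᵥ (Pi.single i 1 - Pi.single j 1)) :
    ∀ i j : Fin n, i ≠ j → Ω i j = ((S - 1) / S) * (1 / k i + 1 / k j) :=
  configuration_graph_effective_resistance_general k hk S hS1 Q Qd hQ h1 Ω hΩ
end

section
/- Let p solve Ωp = 2var_ω(p)u with u^T p = 1 on the full node set, and let p' solve the analogous equation on V = N \ {x} (for resistance matrix Ω_{VV}). Then p' = p - (p_x/k_x)·∑_{j∼x} c_{xj}(e_x - e_j) and var_ω(p') = var_ω(p) - p_x^2/k_x. -/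
/-!
Let `G` be a generalized inverse of the Laplacian `Q` with `Q (G + Gᵀ) = 2 (I - J/n)` and let
`Ω` be its resistance matrix. Then `Q Ω w = (∑ w) (Q diag G + (2/n) 1) - 2 w` (Fiedler's identity),
so applying `Q` to `Ω p = const` and to `Ω p' = const + γ e_x` gives `p' = p - t Q e_x`, and
`p'_x = 0` forces `t = p_x / k_x`. The column `Q e_x` sums to zero, hence is `Ω`-orthogonal to `p`,
and `(Q e_x)ᵀ Ω (Q e_x) = -2 Q_xx = -2 k_x`; expanding `p'ᵀ Ω p'` gives the drop `p_x² / k_x`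
of the variance.
-/

open Finset Matrix

namespace Matrix

variable {ι : Type*} [Fintype ι]

lemma mul_of_one_eq_zero {Q : Matrix ι ι ℝ} (hQ1 : Q *ᵥ 1 = 0) :
    Q * of (fun _ _ => (1 : ℝ)) = 0 := by
  ext i j
  simpa [mul_apply, mulVec, dotProduct] using congrFun hQ1 i

lemma sum_col_eq_zero {Q : Matrix ι ι ℝ} (hQ : Qᵀ = Q) (hQ1 : Q *ᵥ 1 = 0) (x : ι) :
    ∑ i, Q.col x i = 0 := by
  calc ∑ i, Q.col x i = ∑ i, Q x i := sum_congr rfl fun i _ => congrFun (congrFun hQ x) i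
    _ = (Q *ᵥ 1) x := by simp [mulVec, dotProduct]
    _ = 0 := by rw [hQ1, Pi.zero_apply]

lemma sub_smul_dotProduct_mulVec_sub_smul {R : Type*} [CommRing R] {A : Matrix ι ι R}
    (hA : Aᵀ = A) {v w : ι → R} (hvw : w ⬝ᵥ A *ᵥ v = 0) (t : R) :
    (v - t • w) ⬝ᵥ A *ᵥ (v - t • w) = v ⬝ᵥ A *ᵥ v + t ^ 2 * (w ⬝ᵥ A *ᵥ w) := by
  have hwv : v ⬝ᵥ A *ᵥ w = 0 := by
    rw [dotProduct_mulVec, ← mulVec_transpose, hA, dotProduct_comm, hvw]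
  simp only [mulVec_sub, mulVec_smul, sub_dotProduct, dotProduct_sub, smul_dotProduct,
    dotProduct_smul, smul_eq_mul, hvw, hwv]
  ring

variable [DecidableEq ι]

def weightedLaplacian (c : Matrix ι ι ℝ) : Matrix ι ι ℝ :=
  diagonal (fun i => ∑ j, c i j) - c

lemma weightedLaplacian_apply {c : Matrix ι ι ℝ} (hc : ∀ i, c i i = 0) (i j : ι) :
    weightedLaplacian c i j = if i = j then ∑ l, c i l else -c i j := by
  rcases eq_or_ne i j with rfl | hij
  · simp [weightedLaplacian, hc]
  · simp [weightedLaplacian, hij]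

lemma weightedLaplacian_transpose {c : Matrix ι ι ℝ} (hc : c.IsSymm) :
    (weightedLaplacian c)ᵀ = weightedLaplacian c := by
  rw [weightedLaplacian, transpose_sub, diagonal_transpose, hc.eq]

lemma weightedLaplacian_mulVec_one (c : Matrix ι ι ℝ) : weightedLaplacian c *ᵥ 1 = 0 := by
  ext i
  simp only [weightedLaplacian, sub_mulVec, Pi.sub_apply, mulVec_diagonal]
  simp [mulVec, dotProduct]

noncomputable def centering (ι : Type*) [Fintype ι] [DecidableEq ι] : Matrix ι ι ℝ :=
  1 - (Fintype.card ι : ℝ)⁻¹ • of fun _ _ => 1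

lemma centering_mulVec (w : ι → ℝ) :
    centering ι *ᵥ w = w - ((∑ i, w i) / Fintype.card ι) • 1 := by
  rw [centering, sub_mulVec, one_mulVec, smul_mulVec]
  ext i
  simp [mulVec, dotProduct, div_eq_inv_mul]

lemma mul_transpose_eq_mul {Q G : Matrix ι ι ℝ} (hQ : Qᵀ = Q) (hQ1 : Q *ᵥ 1 = 0)
    (hQGQ : Q * G * Q = Q) (hGQ : (G * Q)ᵀ = G * Q) (hQG : Q * G = centering ι) :
    Q * Gᵀ = Q * G := by
  have hGQQ : G * Q * Q = Q := by
    simpa [transpose_mul, hQ, hGQ, Matrix.mul_assoc] using congrArg transpose hQGQ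
  calc Q * Gᵀ = G * Q := by rw [← hGQ, transpose_mul, hQ]
    _ = G * Q * (Q * G + (Fintype.card ι : ℝ)⁻¹ • of fun _ _ => 1) := by
      rw [hQG, centering, sub_add_cancel, Matrix.mul_one]
    _ = Q * G := by
      rw [Matrix.mul_add, ← Matrix.mul_assoc, hGQQ, Matrix.mul_smul, Matrix.mul_assoc G,
        mul_of_one_eq_zero hQ1, Matrix.mul_zero, smul_zero, add_zero]

def resistance (G : Matrix ι ι ℝ) : Matrix ι ι ℝ :=
  of fun i j => (Pi.single i 1 - Pi.single j 1) ⬝ᵥ G *ᵥ (Pi.single i 1 - Pi.single j 1)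

lemma resistance_apply (G : Matrix ι ι ℝ) (i j : ι) :
    resistance G i j = G i i + G j j - G i j - G j i := by
  simp only [resistance, of_apply, mulVec_sub, mulVec_single_one, sub_dotProduct,
    dotProduct_sub, single_dotProduct, col_apply, one_mul]
  ring

lemma resistance_transpose (G : Matrix ι ι ℝ) : (resistance G)ᵀ = resistance G := by
  ext i j
  simp only [transpose_apply, resistance_apply]
  ring

lemma resistance_mulVec (G : Matrix ι ι ℝ) (w : ι → ℝ) :
    resistance G *ᵥ w = (∑ i, w i) • G.diag + (G.diag ⬝ᵥ w) • 1 - (G + Gᵀ) *ᵥ w := by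
  ext i
  simp only [mulVec, dotProduct, resistance_apply, Pi.add_apply, Pi.sub_apply, Pi.smul_apply,
    smul_eq_mul, diag_apply, Pi.one_apply, mul_one, add_apply, transpose_apply, sum_mul,
    ← sum_add_distrib, ← sum_sub_distrib]
  refine sum_congr rfl fun j _ => ?_
  ring

lemma mulVec_resistance_mulVec {Q G : Matrix ι ι ℝ} (hQ1 : Q *ᵥ 1 = 0)
    (hQG : Q * (G + Gᵀ) = (2 : ℝ) • centering ι) (w : ι → ℝ) :
    Q *ᵥ (resistance G *ᵥ w) =
      (∑ i, w i) • (Q *ᵥ G.diag + (2 / Fintype.card ι : ℝ) • 1) - (2 : ℝ) • w := by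
  rw [resistance_mulVec, mulVec_sub, mulVec_add, mulVec_smul, mulVec_smul, hQ1, smul_zero,
    add_zero, mulVec_mulVec, hQG, smul_mulVec, centering_mulVec]
  ext i
  simp only [Pi.sub_apply, Pi.add_apply, Pi.smul_apply, smul_eq_mul, Pi.one_apply]
  ring

lemma exists_eq_sub_smul_col {Q G : Matrix ι ι ℝ} (hQ1 : Q *ᵥ 1 = 0)
    (hQG : Q * (G + Gᵀ) = (2 : ℝ) • centering ι) {w w' : ι → ℝ} {C C' : ℝ} (x : ι)
    (hsum : ∑ i, w' i = ∑ i, w i) (hw : resistance G *ᵥ w = fun _ => C)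
    (hw' : ∀ i, i ≠ x → (resistance G *ᵥ w') i = C') :
    ∃ t : ℝ, w' = w - t • Q.col x := by
  set a := (resistance G *ᵥ w') x - C'
  have hsplit : resistance G *ᵥ w' = C' • 1 + a • Pi.single x 1 := by
    ext i
    rcases eq_or_ne i x with rfl | hi
    · simp [a]
    · simp [hw' i hi, hi]
  have h := mulVec_resistance_mulVec hQ1 hQG w'
  rw [hsplit, mulVec_add, mulVec_smul, mulVec_smul, hQ1, mulVec_single_one, smul_zero, zero_add,
    hsum] at h
  have h0 := mulVec_resistance_mulVec hQ1 hQG w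
  rw [hw, show (fun _ => C : ι → ℝ) = C • 1 by ext; simp, mulVec_smul, hQ1, smul_zero] at h0
  refine ⟨a / 2, funext fun i => ?_⟩
  have hi := congrFun h i
  have h0i := congrFun h0 i
  simp only [Pi.sub_apply, Pi.smul_apply, smul_eq_mul, Pi.zero_apply] at hi h0i ⊢
  linarith

lemma col_dotProduct_resistance_mulVec_col {Q G : Matrix ι ι ℝ} (hQ : Qᵀ = Q)
    (hQ1 : Q *ᵥ 1 = 0) (hQG : Q * (G + Gᵀ) = (2 : ℝ) • centering ι) (x : ι) :
    Q.col x ⬝ᵥ resistance G *ᵥ Q.col x = -2 * Q x x := by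
  have hcol : ∀ v, Q.col x ⬝ᵥ v = (Q *ᵥ v) x := fun v => by
    conv_rhs => rw [← hQ]
    simp [mulVec, dotProduct]
  have h := mulVec_resistance_mulVec hQ1 hQG (Q.col x)
  rw [sum_col_eq_zero hQ hQ1, zero_smul, zero_sub] at h
  rw [hcol, h]
  simp

end Matrix

theorem remove_node_solution_update_general {n : ℕ} (c : Matrix (Fin n) (Fin n) ℝ)
    (hcsym : c.IsSymm) (hcdiag : ∀ i, c i i = 0)
    (Q Qd : Matrix (Fin n) (Fin n) ℝ)
    (hQ : ∀ i j, Q i j = if i = j then ∑ l, c i l else -c i j)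
    (h1 : Q * Qd * Q = Q) (h4 : (Qd * Q)ᵀ = Qd * Q)
    (hconn : Q * Qd = 1 - ((n : ℝ))⁻¹ • Matrix.of (fun _ _ => (1 : ℝ)))
    (Ω : Matrix (Fin n) (Fin n) ℝ)
    (hΩ : ∀ i j, Ω i j =
      (Pi.single i 1 - Pi.single j 1) ⬝ᵥ Qd *ᵥ (Pi.single i 1 - Pi.single j 1))
    (x : Fin n) (kx : ℝ) (hkx : kx = ∑ j, c x j) (hkx0 : 0 < kx)
    (p : Fin n → ℝ)
    (hp : Ω *ᵥ p = fun _ => 2 * ((1 / 2) * (p ⬝ᵥ Ω *ᵥ p))) (hpsum : ∑ i, p i = 1)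
    (p' : Fin n → ℝ) (hp'x : p' x = 0)
    (hp' : ∀ i, i ≠ x → (Ω *ᵥ p') i = 2 * ((1 / 2) * (p' ⬝ᵥ Ω *ᵥ p')))
    (hp'sum : ∑ i, p' i = 1) :
    (∀ i, p' i = p i - (p x / kx) *
        ((if i = x then kx else 0) - c x i))
      ∧ (1 / 2) * (p' ⬝ᵥ Ω *ᵥ p') = (1 / 2) * (p ⬝ᵥ Ω *ᵥ p) - (p x) ^ 2 / kx := by
  obtain rfl : Q = weightedLaplacian c :=
    Matrix.ext fun i j => (hQ i j).trans (weightedLaplacian_apply hcdiag i j).symm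
  obtain rfl : Ω = resistance Qd := Matrix.ext hΩ
  set Q := weightedLaplacian c
  have hQT : Qᵀ = Q := weightedLaplacian_transpose hcsym
  have hQ1 : Q *ᵥ 1 = 0 := weightedLaplacian_mulVec_one c
  have hcol : ∀ i, Q.col x i = (if i = x then kx else 0) - c x i := by
    intro i
    rcases eq_or_ne i x with rfl | hix
    · simp [Q, weightedLaplacian, hkx]
    · simp [Q, weightedLaplacian, hix, hcsym.apply x i]
  have hQxx : Q x x = kx := by simpa [hcdiag] using hcol x
  have hQQd : Q * Qd = centering (Fin n) := by rw [hconn, centering, Fintype.card_fin]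
  have hQG : Q * (Qd + Qdᵀ) = (2 : ℝ) • centering (Fin n) := by
    rw [Matrix.mul_add, mul_transpose_eq_mul hQT hQ1 h1 h4 hQQd, hQQd, two_smul]
  obtain ⟨t, hpt⟩ := exists_eq_sub_smul_col hQ1 hQG x (hp'sum.trans hpsum.symm) hp hp'
  obtain rfl : t = p x / kx := by
    have hx := congrFun hpt x
    simp only [hp'x, Pi.sub_apply, Pi.smul_apply, smul_eq_mul, col_apply, hQxx] at hx
    field_simp
    linarith
  have horth : Q.col x ⬝ᵥ resistance Qd *ᵥ p = 0 := by
    rw [hp]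
    exact (sum_mul _ _ _).symm.trans (by rw [sum_col_eq_zero hQT hQ1 x, zero_mul])
  refine ⟨fun i => by rw [hpt, Pi.sub_apply, Pi.smul_apply, smul_eq_mul, hcol], ?_⟩
  rw [hpt, sub_smul_dotProduct_mulVec_sub_smul (resistance_transpose Qd) horth,
    col_dotProduct_resistance_mulVec_col hQT hQ1 hQG, hQxx]
  field_simp
  ring

/-- Let `p` solve `Ωp = 2 var_ω(p) u`, `uᵀp = 1` on the full node set of a connected weighted
graph, and let `p'` (supported on `V = N \ {x}`) solve the analogous equation for the submatrix
`Ω_{VV}` (the resistance matrix of the Schur-complement graph). Then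
`p' = p - (p_x/k_x) ∑_{j∼x} c_{xj} (e_x - e_j)` and `var_ω(p') = var_ω(p) - p_x²/k_x`. -/
theorem remove_node_solution_update {n : ℕ} (c : Matrix (Fin n) (Fin n) ℝ)
    (hcsym : c.IsSymm) (hcdiag : ∀ i, c i i = 0) (hc0 : ∀ i j, 0 ≤ c i j)
    (Q Qd : Matrix (Fin n) (Fin n) ℝ)
    (hQ : ∀ i j, Q i j = if i = j then ∑ l, c i l else -c i j)
    (h1 : Q * Qd * Q = Q) (h2 : Qd * Q * Qd = Qd)
    (h3 : (Q * Qd)ᵀ = Q * Qd) (h4 : (Qd * Q)ᵀ = Qd * Q)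
    (hconn : Q * Qd = 1 - ((n : ℝ))⁻¹ • Matrix.of (fun _ _ => (1 : ℝ)))
    (Ω : Matrix (Fin n) (Fin n) ℝ)
    (hΩ : ∀ i j, Ω i j =
      (Pi.single i 1 - Pi.single j 1) ⬝ᵥ Qd *ᵥ (Pi.single i 1 - Pi.single j 1))
    (x : Fin n) (kx : ℝ) (hkx : kx = ∑ j, c x j) (hkx0 : 0 < kx)
    (p : Fin n → ℝ)
    (hp : Ω *ᵥ p = fun _ => 2 * ((1 / 2) * (p ⬝ᵥ Ω *ᵥ p))) (hpsum : ∑ i, p i = 1)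
    (p' : Fin n → ℝ) (hp'x : p' x = 0)
    (hp' : ∀ i, i ≠ x → (Ω *ᵥ p') i = 2 * ((1 / 2) * (p' ⬝ᵥ Ω *ᵥ p')))
    (hp'sum : ∑ i, p' i = 1) :
    (∀ i, p' i = p i - (p x / kx) *
        ((if i = x then kx else 0) - c x i))
      ∧ (1 / 2) * (p' ⬝ᵥ Ω *ᵥ p') = (1 / 2) * (p ⬝ᵥ Ω *ᵥ p) - (p x) ^ 2 / kx :=
  remove_node_solution_update_general c hcsym hcdiag Q Qd hQ h1 h4 hconn Ω hΩ x kx hkx hkx0 p hp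
    hpsum p' hp'x hp' hp'sum
end
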